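/- arXiv:2308.06474 — 7 statements merged into one kernel-verified Lean document; each statement's English description precedes it below -/
import Mathlib

section
/- Let (Ω, 𝓕, P) be a probability space, (𝒴, d) a metric space, and Y₁, Y₂ : Ω → 𝒴 measurable random elements. Let C : 𝒴 → ℝ satisfy |C(y₁) - C(y₂)| ≤ H·d(y₁,y₂)^γ for all y₁, y₂ ∈ 𝒴, where H, γ > 0. Let ε ∈ ℝ, c ∈ ℝ and δ, δ̄ ∈ (0,1). If P(d(Y₁,Y₂) ≤ ε) ≥ 1 - δ and P(C(Y₁) ≥ c) ≥ 1 - δ̄, then P(C(Y₂) ≥ c - H·ε^γ) ≥ 1 - δ - δ̄. -/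
open MeasureTheory

/-- Transference under stochastic conformance (Theorem 1). -/
theorem transference_stochastic_conformance
    {Ω : Type*} [MeasurableSpace Ω] (P : Measure Ω) [IsProbabilityMeasure P]
    {𝒴 : Type*} [MetricSpace 𝒴] [MeasurableSpace 𝒴] [BorelSpace 𝒴]
    (Y₁ Y₂ : Ω → 𝒴) (hY₁ : Measurable Y₁) (hY₂ : Measurable Y₂)
    (C : 𝒴 → ℝ) (H γ : ℝ) (hH : 0 < H) (hγ : 0 < γ)
    (hC : ∀ y₁ y₂ : 𝒴, |C y₁ - C y₂| ≤ H * dist y₁ y₂ ^ γ)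
    (ε c δ δ' : ℝ) (hδ : δ ∈ Set.Ioo (0 : ℝ) 1) (hδ' : δ' ∈ Set.Ioo (0 : ℝ) 1)
    (h1 : 1 - δ ≤ (P {ω | dist (Y₁ ω) (Y₂ ω) ≤ ε}).toReal)
    (h2 : 1 - δ' ≤ (P {ω | c ≤ C (Y₁ ω)}).toReal) :
    1 - δ - δ' ≤ (P {ω | c - H * ε ^ γ ≤ C (Y₂ ω)}).toReal := by
  set A : Set Ω := {ω | dist (Y₁ ω) (Y₂ ω) ≤ ε} with hA
  set B : Set Ω := {ω | c ≤ C (Y₁ ω)} with hB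
  set T : Set Ω := {ω | c - H * ε ^ γ ≤ C (Y₂ ω)} with hT
  have hCcont : Continuous C := by
    rw [Metric.continuous_iff]
    intro b e he
    refine ⟨(e / H) ^ γ⁻¹, Real.rpow_pos_of_pos (div_pos he hH) _, fun a ha => ?_⟩
    have h0 : dist a b ^ γ < ((e / H) ^ γ⁻¹) ^ γ :=
      Real.rpow_lt_rpow dist_nonneg ha hγ
    rw [Real.rpow_inv_rpow (div_pos he hH).le hγ.ne'] at h0
    have := hC a b
    rw [Real.dist_eq]
    calc |C a - C b| ≤ H * dist a b ^ γ := this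
      _ < H * (e / H) := by exact mul_lt_mul_of_pos_left h0 hH
      _ = e := by field_simp
  have mB : MeasurableSet B := by
    have : MeasurableSet {y : 𝒴 | c ≤ C y} :=
      (isClosed_le continuous_const hCcont).measurableSet
    exact hY₁ this
  -- ε ≥ 0
  have hεnn : 0 ≤ ε := by
    by_contra hlt
    push_neg at hlt
    have : A = ∅ := by
      ext ω
      simp only [hA, Set.mem_setOf_eq, Set.mem_empty_iff_false, iff_false, not_le]
      exact lt_of_lt_of_le hlt dist_nonneg
    rw [this] at h1
    simp at h1
    linarith [hδ.2]
  -- inclusion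
  have hsub : B ∩ A ⊆ T := by
    rintro ω ⟨hωB, hωA⟩
    simp only [hT, Set.mem_setOf_eq]
    have hd : H * dist (Y₁ ω) (Y₂ ω) ^ γ ≤ H * ε ^ γ := by
      apply mul_le_mul_of_nonneg_left _ hH.le
      exact Real.rpow_le_rpow dist_nonneg hωA hγ.le
    have := hC (Y₁ ω) (Y₂ ω)
    have h3 : C (Y₁ ω) - C (Y₂ ω) ≤ H * dist (Y₁ ω) (Y₂ ω) ^ γ :=
      (abs_le.mp this).2
    have hωB' : c ≤ C (Y₁ ω) := hωB
    linarith
  have hsum : P (B ∪ A) + P (B ∩ A) = P B + P A := measure_union_add_inter' mB A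
  have hfin : ∀ s : Set Ω, P s ≠ ⊤ := fun s => measure_ne_top P s
  have hUle : (P (B ∪ A)).toReal ≤ 1 := by
    have := prob_le_one (μ := P) (s := B ∪ A)
    calc (P (B ∪ A)).toReal ≤ (1 : ENNReal).toReal :=
      ENNReal.toReal_mono (by simp) this
    _ = 1 := by simp
  have hsum' : (P (B ∪ A)).toReal + (P (B ∩ A)).toReal
      = (P B).toReal + (P A).toReal := by
    rw [← ENNReal.toReal_add (hfin _) (hfin _), ← ENNReal.toReal_add (hfin _) (hfin _), hsum]
  have hmono : (P (B ∩ A)).toReal ≤ (P T).toReal := by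
    exact ENNReal.toReal_mono (hfin _) (measure_mono hsub)
  linarith
end

section
/- Let (Ω, 𝓕, P) be a probability space, (𝒴, d) a metric space, and Y₁, Y₂ : Ω → 𝒴 random elements. Let R be a functional mapping real-valued random variables on Ω to ℝ that is monotone, positively homogeneous, and subadditive. Let C : 𝒴 → ℝ satisfy |C(y₁) - C(y₂)| ≤ H·d(y₁,y₂) for all y₁, y₂ ∈ 𝒴, where H > 0. If R(d(Y₁,Y₂)) ≤ r for some r ∈ ℝ, then R(-C(Y₂)) ≤ R(-C(Y₁)) + H·r. -/
/-- Transference of risk under non-conformance risk (Theorem 3). -/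
theorem transference_nonconformance_risk
    {Ω : Type*} [MeasurableSpace Ω]
    {𝒴 : Type*} [MetricSpace 𝒴]
    (Y₁ Y₂ : Ω → 𝒴)
    (R : (Ω → ℝ) → ℝ)
    (hmono : ∀ Z Z' : Ω → ℝ, (∀ ω, Z ω ≤ Z' ω) → R Z ≤ R Z')
    (hhom : ∀ (c : ℝ), 0 ≤ c → ∀ Z : Ω → ℝ, R (fun ω => c * Z ω) = c * R Z)
    (hsub : ∀ Z Z' : Ω → ℝ, R (fun ω => Z ω + Z' ω) ≤ R Z + R Z')
    (C : 𝒴 → ℝ) (H : ℝ) (hH : 0 < H)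
    (hC : ∀ y₁ y₂ : 𝒴, |C y₁ - C y₂| ≤ H * dist y₁ y₂)
    (r : ℝ) (hr : R (fun ω => dist (Y₁ ω) (Y₂ ω)) ≤ r) :
    R (fun ω => -C (Y₂ ω)) ≤ R (fun ω => -C (Y₁ ω)) + H * r := by
  have h1 : R (fun ω => -C (Y₂ ω)) ≤
      R (fun ω => -C (Y₁ ω) + H * dist (Y₁ ω) (Y₂ ω)) := by
    apply hmono
    intro ω
    have := (abs_le.mp (hC (Y₁ ω) (Y₂ ω))).2
    linarith
  have h2 := hsub (fun ω => -C (Y₁ ω)) (fun ω => H * dist (Y₁ ω) (Y₂ ω))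
  have h3 := hhom H hH.le (fun ω => dist (Y₁ ω) (Y₂ ω))
  have h4 : H * R (fun ω => dist (Y₁ ω) (Y₂ ω)) ≤ H * r :=
    mul_le_mul_of_nonneg_left hr hH.le
  calc R (fun ω => -C (Y₂ ω)) ≤ _ := h1
    _ ≤ _ := h2
    _ ≤ _ := by rw [h3]; linarith
end

section
/- Let (Ω, 𝓕, P) be a probability space, (𝒴, d) a metric space, 𝒰 a nonempty set, and Y₁, Y₂ : 𝒰 × Ω → 𝒴 families of random elements indexed by inputs U ∈ 𝒰, such that all suprema and infima over U appearing below are finite for every ω. Let R be a functional mapping real-valued random variables on Ω to ℝ that is monotone, positively homogeneous, and subadditive. Let C : 𝒴 → ℝ satisfy |C(y₁) - C(y₂)| ≤ H·d(y₁,y₂) for all y₁, y₂ ∈ 𝒴, where H > 0. If R(sup_{U∈𝒰} d(Y₁(U,·), Y₂(U,·))) ≤ r for some r ∈ ℝ, then R(-inf_{U∈𝒰} C(Y₂(U,·))) ≤ R(-inf_{U∈𝒰} C(Y₁(U,·))) + H·r. -/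
/-- Transference of risk under non-conformance risk with unknown deterministic
inputs (Theorem 4). -/
theorem transference_nonconformance_risk_unknown_input
    {Ω : Type*} [MeasurableSpace Ω]
    {𝒴 : Type*} [MetricSpace 𝒴]
    {𝒰 : Type*} [Nonempty 𝒰]
    (Y₁ Y₂ : 𝒰 → Ω → 𝒴)
    (hbdd_d : ∀ ω : Ω, BddAbove (Set.range fun U : 𝒰 => dist (Y₁ U ω) (Y₂ U ω)))
    (R : (Ω → ℝ) → ℝ)
    (hmono : ∀ Z Z' : Ω → ℝ, (∀ ω, Z ω ≤ Z' ω) → R Z ≤ R Z')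
    (hhom : ∀ (c : ℝ), 0 ≤ c → ∀ Z : Ω → ℝ, R (fun ω => c * Z ω) = c * R Z)
    (hsub : ∀ Z Z' : Ω → ℝ, R (fun ω => Z ω + Z' ω) ≤ R Z + R Z')
    (C : 𝒴 → ℝ) (H : ℝ) (hH : 0 < H)
    (hbdd₁ : ∀ ω : Ω, BddBelow (Set.range fun U : 𝒰 => C (Y₁ U ω)))
    (hbdd₂ : ∀ ω : Ω, BddBelow (Set.range fun U : 𝒰 => C (Y₂ U ω)))
    (hC : ∀ y₁ y₂ : 𝒴, |C y₁ - C y₂| ≤ H * dist y₁ y₂)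
    (r : ℝ) (hr : R (fun ω => ⨆ U : 𝒰, dist (Y₁ U ω) (Y₂ U ω)) ≤ r) :
    R (fun ω => -(⨅ U : 𝒰, C (Y₂ U ω))) ≤
      R (fun ω => -(⨅ U : 𝒰, C (Y₁ U ω))) + H * r := by
  have key : ∀ ω, -(⨅ U : 𝒰, C (Y₂ U ω)) ≤
      -(⨅ U : 𝒰, C (Y₁ U ω)) + H * ⨆ U : 𝒰, dist (Y₁ U ω) (Y₂ U ω) := by
    intro ω
    have h1 : (⨅ U : 𝒰, C (Y₁ U ω)) - H * (⨆ U : 𝒰, dist (Y₁ U ω) (Y₂ U ω)) ≤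
        ⨅ U : 𝒰, C (Y₂ U ω) := by
      apply le_ciInf
      intro U
      have hd : dist (Y₁ U ω) (Y₂ U ω) ≤ ⨆ U : 𝒰, dist (Y₁ U ω) (Y₂ U ω) :=
        le_ciSup (hbdd_d ω) U
      have hinf : (⨅ U : 𝒰, C (Y₁ U ω)) ≤ C (Y₁ U ω) := ciInf_le (hbdd₁ ω) U
      have := (abs_le.mp (hC (Y₁ U ω) (Y₂ U ω))).2
      nlinarith [mul_le_mul_of_nonneg_left hd hH.le]
    linarith
  calc R (fun ω => -(⨅ U : 𝒰, C (Y₂ U ω)))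
      ≤ R (fun ω => -(⨅ U : 𝒰, C (Y₁ U ω)) +
          H * ⨆ U : 𝒰, dist (Y₁ U ω) (Y₂ U ω)) := hmono _ _ key
    _ ≤ R (fun ω => -(⨅ U : 𝒰, C (Y₁ U ω))) +
          R (fun ω => H * ⨆ U : 𝒰, dist (Y₁ U ω) (Y₂ U ω)) := hsub _ _
    _ = R (fun ω => -(⨅ U : 𝒰, C (Y₁ U ω))) +
          H * R (fun ω => ⨆ U : 𝒰, dist (Y₁ U ω) (Y₂ U ω)) := by
          rw [hhom H hH.le]
    _ ≤ R (fun ω => -(⨅ U : 𝒰, C (Y₁ U ω))) + H * r := by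
          have := mul_le_mul_of_nonneg_left hr hH.le
          linarith
end

section
/- Let Z, Z⁽¹⁾, …, Z⁽ᵏ⁾ be independent and identically distributed real-valued random variables on a probability space (Ω, 𝓕, P), and let δ ∈ (0,1). Set p := ⌈(k+1)(1-δ)⌉ and assume p ≤ k. Let Z₍p₎ denote the p-th smallest value among Z⁽¹⁾, …, Z⁽ᵏ⁾ (the p-th order statistic). Then P(Z ≤ Z₍p₎) ≥ 1 - δ. -/
/-!
Put `n = k + 1` and let `R j = #{i | W i < W j}` be the strict rank of `W j` among all `n` scores.
If `R (last k) < p`, fewer than `p` calibration scores lie strictly below `Z`, so `Z ≤ Z₍p₎`.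
For any vector at most `n - p` indices have rank `≥ p`: the index of smallest value among them
has all strictly smaller coordinates outside the set. The i.i.d. vector `W` is exchangeable, so
the events `{p ≤ R j}` all have the same probability, whence `n * P(p ≤ R (last k)) ≤ n - p` and
`P(Z ≤ Z₍p₎) ≥ p / n ≥ 1 - δ`.
-/

open MeasureTheory ProbabilityTheory

/-- The `p`-th smallest value (1-indexed `p`-th order statistic) among the
values `v 0, …, v (k-1)`. -/
noncomputable def orderStat {k : ℕ} (v : Fin k → ℝ) (p : ℕ) : ℝ :=
  ((Multiset.map v Finset.univ.val).sort (· ≤ ·)).getD (p - 1) 0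

open Finset

section Ranks

variable {ι α : Type*} [Fintype ι] [LinearOrder α]

def countLT (v : ι → α) (x : α) : ℕ := #{i | v i < x}

lemma countLT_comp_equiv (v : ι → α) (e : ι ≃ ι) (x : α) :
    countLT (fun i => v (e i)) x = countLT v x :=
  card_equiv e (by simp)

lemma card_filter_le_countLT_le (v : ι → α) (p : ℕ) :
    #{j | p ≤ countLT v (v j)} ≤ Fintype.card ι - p := by
  classical
  set T : Finset ι := {j | p ≤ countLT v (v j)}
  obtain hT | hT := T.eq_empty_or_nonempty
  · simp [hT]
  obtain ⟨j₀, hj₀T, hj₀min⟩ := T.exists_min_image v hT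
  have hrank_le : countLT v (v j₀) ≤ #Tᶜ := card_le_card fun i hi => by
    simp only [mem_filter, mem_univ, true_and] at hi
    exact mem_compl.2 fun hiT => (hj₀min i hiT).not_gt hi
  have hp_le : p ≤ countLT v (v j₀) := (mem_filter.1 hj₀T).2
  have := card_compl_add_card T
  omega

lemma countLT_eq_countP_sort (v : ι → α) (x : α) :
    countLT v x = ((Multiset.map v univ.val).sort (· ≤ ·)).countP (fun y => decide (y < x)) := by
  rw [← Multiset.coe_countP, Multiset.sort_eq, Multiset.countP_map]
  rfl

lemma countLT_eq_countLT_castSucc_add {k : ℕ} (v : Fin (k + 1) → α) (x : α) :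
    countLT v x =
      countLT (fun i : Fin k => v i.castSucc) x + if v (Fin.last k) < x then 1 else 0 := by
  simp only [countLT, card_filter, Fin.sum_univ_castSucc]

end Ranks

lemma List.SortedLE.succ_le_countP_lt {α : Type*} [LinearOrder α] {l : List α}
    (hl : l.SortedLE) {q : ℕ} (hq : q < l.length) {x : α} (hx : l[q] < x) :
    q + 1 ≤ l.countP (fun y => decide (y < x)) := by
  calc q + 1 = (l.take (q + 1)).countP (fun y => decide (y < x)) := by
        rw [List.countP_eq_length.2, List.length_take]
        · omega
        intro y hy
        obtain ⟨i, hi, rfl⟩ := List.mem_iff_getElem.1 hy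
        simp only [List.length_take] at hi
        simp only [List.getElem_take, decide_eq_true_eq]
        exact (hl.getElem_le_getElem_of_le (by omega)).trans_lt hx
    _ ≤ l.countP (fun y => decide (y < x)) := (List.take_sublist _ _).countP_le

lemma le_orderStat_of_countLT_lt {k p : ℕ} (hpk : p ≤ k) (v : Fin k → ℝ) {x : ℝ}
    (h : countLT v x < p) : x ≤ orderStat v p := by
  set l := (Multiset.map v univ.val).sort (· ≤ ·)
  have hq : p - 1 < l.length := by simp [l]; omega
  have hget : orderStat v p = l[p - 1] := by rw [orderStat, List.getD_eq_getElem _ _ hq]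
  by_contra! hx
  have := (Multiset.pairwise_sort _ _).sortedLE.succ_le_countP_lt hq (hget ▸ hx)
  rw [← countLT_eq_countP_sort] at this
  omega

lemma measurableSet_le_countLT {ι : Type*} [Fintype ι] (p : ℕ) (j : ι) :
    MeasurableSet {v : ι → ℝ | p ≤ countLT v (v j)} := by
  have : Measurable fun v : ι → ℝ => countLT v (v j) := by
    simp only [countLT, card_filter]
    exact Finset.measurable_sum _ fun i _ =>
      Measurable.ite (measurableSet_lt (measurable_pi_apply i) (measurable_pi_apply j))
        measurable_const measurable_const
  exact this measurableSet_Ici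

section Exchangeability

variable {Ω ι : Type*} [MeasurableSpace Ω] [Fintype ι]

open scoped Classical in
lemma sum_measure_le_of_forall_card_le (μ : Measure Ω) {s : ι → Set Ω}
    (hs : ∀ j, MeasurableSet (s j)) {m : ℕ} (h : ∀ ω, #{j | ω ∈ s j} ≤ m) :
    ∑ j, μ (s j) ≤ m * μ Set.univ :=
  calc ∑ j, μ (s j) = ∫⁻ ω, ∑ j, (s j).indicator 1 ω ∂μ := by
        rw [lintegral_finsetSum _ fun j _ => measurable_one.indicator (hs j)]
        simp_rw [lintegral_indicator_one (hs _)]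
    _ = ∫⁻ ω, (#{j | ω ∈ s j} : ENNReal) ∂μ := by
        simp only [Set.indicator_apply, Pi.one_apply, card_filter, Nat.cast_sum, Nat.cast_ite,
          Nat.cast_one, Nat.cast_zero]
    _ ≤ ∫⁻ _, (m : ENNReal) ∂μ := lintegral_mono fun ω => Nat.cast_le.2 (h ω)
    _ = m * μ Set.univ := lintegral_const _

variable {P : Measure Ω} [IsProbabilityMeasure P]

lemma ProbabilityTheory.iIndepFun.identDistrib_precomp {β : Type*} [MeasurableSpace β]
    {W : ι → Ω → β} (hindep : iIndepFun W P) (hmeas : ∀ i, Measurable (W i))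
    (hident : ∀ i j, P.map (W i) = P.map (W j)) (e : ι ≃ ι) :
    IdentDistrib (fun ω i => W (e i) ω) (fun ω i => W i ω) P P where
  aemeasurable_fst := (measurable_pi_lambda _ fun i => hmeas (e i)).aemeasurable
  aemeasurable_snd := (measurable_pi_lambda _ hmeas).aemeasurable
  map_eq := by
    rw [(iIndepFun_iff_map_fun_eq_pi_map fun i => (hmeas (e i)).aemeasurable).1
        (hindep.precomp e.injective),
      (iIndepFun_iff_map_fun_eq_pi_map fun i => (hmeas i).aemeasurable).1 hindep]
    exact congrArg Measure.pi (funext fun i => hident _ _)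

lemma card_mul_measure_le_countLT_le {W : ι → Ω → ℝ} (hindep : iIndepFun W P)
    (hmeas : ∀ i, Measurable (W i)) (hident : ∀ i j, P.map (W i) = P.map (W j)) (p : ℕ) (j : ι) :
    Fintype.card ι * P {ω | p ≤ countLT (W · ω) (W j ω)} ≤ (Fintype.card ι - p : ℕ) := by
  classical
  set S : ι → Set Ω := fun i => {ω | p ≤ countLT (W · ω) (W i ω)}
  have hS : ∀ i, MeasurableSet (S i) := fun i =>
    measurable_pi_lambda _ hmeas (measurableSet_le_countLT p i)
  have hexch : ∀ i, P (S i) = P (S j) := fun i => by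
    have hswap : (fun ω l => W (Equiv.swap i j l) ω) ⁻¹' {v | p ≤ countLT v (v j)} = S i := by
      ext ω
      simp [S, countLT_comp_equiv (W · ω)]
    rw [← hswap, (hindep.identDistrib_precomp hmeas hident _).measure_mem_eq
      (measurableSet_le_countLT p j)]
    rfl
  calc Fintype.card ι * P (S j) = ∑ i, P (S i) := by simp [hexch]
    _ ≤ (Fintype.card ι - p : ℕ) * P Set.univ :=
      sum_measure_le_of_forall_card_le P hS fun ω => by
        convert card_filter_le_countLT_le (W · ω) p
        exact Iff.rfl
    _ = (Fintype.card ι - p : ℕ) := by simp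

end Exchangeability

theorem conformal_prediction_bound_general
    {Ω : Type*} [MeasurableSpace Ω] (P : Measure Ω) [IsProbabilityMeasure P]
    (k : ℕ) (W : Fin (k + 1) → Ω → ℝ)
    (hmeas : ∀ i, Measurable (W i))
    (hindep : iIndepFun W P)
    (hident : ∀ i j, Measure.map (W i) P = Measure.map (W j) P)
    (Z : Ω → ℝ) (hZ : Z = W (Fin.last k))
    (Zs : Fin k → Ω → ℝ) (hZs : ∀ i : Fin k, Zs i = W i.castSucc)
    (δ : ℝ)
    (p : ℕ) (hp : p = ⌈(k + 1 : ℝ) * (1 - δ)⌉₊) (hpk : p ≤ k) :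
    1 - δ ≤ (P {ω | Z ω ≤ orderStat (fun i => Zs i ω) p}).toReal := by
  subst hZ
  set S := {ω | p ≤ countLT (W · ω) (W (Fin.last k) ω)}
  have hS : MeasurableSet S := measurable_pi_lambda _ hmeas (measurableSet_le_countLT p _)
  have hPS : (k + 1 : ℝ) * P.real S ≤ k + 1 - p := by
    have := ENNReal.toReal_mono (by simp)
      (card_mul_measure_le_countLT_le hindep hmeas hident p (Fin.last k))
    rwa [ENNReal.toReal_mul, ENNReal.toReal_natCast, ENNReal.toReal_natCast, Fintype.card_fin,
      Nat.cast_sub (by omega), Nat.cast_succ] at this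
  have hcover : Sᶜ ⊆ {ω | W (Fin.last k) ω ≤ orderStat (fun i => Zs i ω) p} := fun ω hω => by
    refine le_orderStat_of_countLT_lt hpk _ ?_
    simpa [S, countLT_eq_countLT_castSucc_add, hZs] using hω
  have hδp : (k + 1 : ℝ) * (1 - δ) ≤ p := hp ▸ Nat.le_ceil _
  have hPS_le : P.real S ≤ δ :=
    le_of_mul_le_mul_left (by linarith) (by positivity : (0 : ℝ) < k + 1)
  calc 1 - δ ≤ 1 - P.real S := by linarith
    _ = P.real Sᶜ := (probReal_compl_eq_one_sub hS).symm
    _ ≤ _ := measureReal_mono hcover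

/-- Conformal prediction guarantee (Theorem 5): for i.i.d. nonconformity scores
`Z, Z⁽¹⁾, …, Z⁽ᵏ⁾` and `p = ⌈(k+1)(1-δ)⌉` with `p ≤ k`, the `p`-th order
statistic of `Z⁽¹⁾, …, Z⁽ᵏ⁾` upper-bounds `Z` with probability at least `1-δ`. -/
theorem conformal_prediction_bound
    {Ω : Type*} [MeasurableSpace Ω] (P : Measure Ω) [IsProbabilityMeasure P]
    (k : ℕ) (W : Fin (k + 1) → Ω → ℝ)
    (hmeas : ∀ i, Measurable (W i))
    (hindep : iIndepFun W P)
    (hident : ∀ i j, Measure.map (W i) P = Measure.map (W j) P)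
    (Z : Ω → ℝ) (hZ : Z = W (Fin.last k))
    (Zs : Fin k → Ω → ℝ) (hZs : ∀ i : Fin k, Zs i = W i.castSucc)
    (δ : ℝ) (hδ : δ ∈ Set.Ioo (0 : ℝ) 1)
    (p : ℕ) (hp : p = ⌈(k + 1 : ℝ) * (1 - δ)⌉₊) (hpk : p ≤ k) :
    1 - δ ≤ (P {ω | Z ω ≤ orderStat (fun i => Zs i ω) p}).toReal :=
  conformal_prediction_bound_general P k W hmeas hindep hident Z hZ Zs hZs δ p hp hpk
end

section
/- Let ε > 0 and δ ∈ (0,1), and choose any δ̄ ∈ (δ, 1). Let a ≥ (ε/(1-δ̄))·(1+√δ̄), and let Y₁, Y₂ be independent random variables, each uniformly distributed on [0, a]. Then P(|Y₁ - Y₂| ≤ ε) ≤ 1 - δ̄ < 1 - δ; in particular, the condition P(|Y₁ - Y₂| ≤ ε) ≥ 1 - δ fails. -/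
/-!
Under the product law of `(Y₁, Y₂)` the band `|x - y| ≤ ε` misses the two corner triangles
`y > x + ε` and `x > y + ε` of the square `[0, a]²`, each of mass `(1 - ε/a)² / 2`, so
`P(|Y₁ - Y₂| ≤ ε) ≤ 1 - (1 - ε/a)²`. Since `1 - δ̄ = (1 - √δ̄)(1 + √δ̄)`, the hypothesis on `a`
says `a ≥ ε / (1 - √δ̄)`, i.e. `(1 - ε/a)² ≥ δ̄`.
-/

open MeasureTheory ProbabilityTheory

noncomputable def uniformIcc (a : ℝ) : Measure ℝ :=
  (ENNReal.ofReal a)⁻¹ • volume.restrict (Set.Icc 0 a)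

open Set

theorem ProbabilityTheory.IndepFun.measure_preimage_eq_prod {Ω α β : Type*} [MeasurableSpace Ω]
    [MeasurableSpace α] [MeasurableSpace β] {P : Measure Ω} [IsFiniteMeasure P]
    {X : Ω → α} {Y : Ω → β}
    (hXY : IndepFun X Y P) (hX : AEMeasurable X P) (hY : AEMeasurable Y P) {s : Set (α × β)}
    (hs : MeasurableSet s) :
    P ((fun ω ↦ (X ω, Y ω)) ⁻¹' s) = ((P.map X).prod (P.map Y)) s := by
  rw [← (indepFun_iff_map_prod_eq_prod_map_map hX hY).1 hXY,
    Measure.map_apply_of_aemeasurable (hX.prodMk hY) hs]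

lemma div_one_sub_mul_one_add_sqrt (ε : ℝ) {t : ℝ} (ht₀ : 0 ≤ t) (ht₁ : t < 1) :
    ε / (1 - t) * (1 + √t) = ε / (1 - √t) := by
  have hs : √t < 1 := Real.sqrt_one ▸ Real.sqrt_lt_sqrt ht₀ ht₁
  have hfactor : 1 - t = (1 - √t) * (1 + √t) := by nlinarith [Real.sq_sqrt ht₀]
  rw [hfactor]
  field_simp

lemma sq_le_one_sub_div_sq {ε s a : ℝ} (hε : 0 < ε) (hs₀ : 0 ≤ s) (hs₁ : s < 1)
    (ha : ε / (1 - s) ≤ a) : 0 < a ∧ ε ≤ a ∧ s ^ 2 ≤ (1 - ε / a) ^ 2 := by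
  rw [div_le_iff₀ (sub_pos.2 hs₁)] at ha
  have ha₀ : 0 < a := by nlinarith
  refine ⟨ha₀, by nlinarith, pow_le_pow_left₀ hs₀ ?_ 2⟩
  rw [le_sub_iff_add_le, ← le_sub_iff_add_le', div_le_iff₀ ha₀]
  linarith

lemma volume_regionBetween_add_const_const {c a : ℝ} (hca : c ≤ a) :
    volume (regionBetween (· + c) (fun _ ↦ a) (Ioo 0 (a - c))) =
      ENNReal.ofReal ((a - c) ^ 2 / 2) := by
  have hac : 0 ≤ a - c := sub_nonneg.2 hca
  rw [Measure.volume_eq_prod, volume_regionBetween_eq_integral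
    ((continuous_add_const c).integrableOn_Icc.mono_set Ioo_subset_Icc_self)
    (continuous_const.integrableOn_Icc.mono_set Ioo_subset_Icc_self) measurableSet_Ioo
    (fun x hx ↦ by linarith [hx.2]), ← integral_Ioc_eq_integral_Ioo,
    ← intervalIntegral.integral_of_le hac]
  simp only [Pi.sub_apply, sub_add_eq_sub_sub_swap]
  rw [intervalIntegral.integral_sub intervalIntegrable_const intervalIntegral.intervalIntegrable_id,
    integral_id, intervalIntegral.integral_const, smul_eq_mul]
  congr 1
  ring

lemma isProbabilityMeasure_uniformIcc {a : ℝ} (ha : 0 < a) : IsProbabilityMeasure (uniformIcc a) :=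
  ⟨by simp [uniformIcc, ENNReal.inv_mul_cancel, ha]⟩

lemma uniformIcc_prod_uniformIcc (a : ℝ) :
    (uniformIcc a).prod (uniformIcc a) =
      ((ENNReal.ofReal a)⁻¹ * (ENNReal.ofReal a)⁻¹) • volume.restrict (Icc 0 a ×ˢ Icc 0 a) := by
  rw [uniformIcc, Measure.prod_smul_left, Measure.prod_smul_right, Measure.prod_restrict,
    ← Measure.volume_eq_prod, smul_smul]

lemma uniformIcc_prod_abs_sub_le {a ε : ℝ} (ha : 0 < a) (hε : 0 ≤ ε) (hεa : ε ≤ a) :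
    ((uniformIcc a).prod (uniformIcc a)).real {p | |p.1 - p.2| ≤ ε} ≤ 1 - (1 - ε / a) ^ 2 := by
  have := isProbabilityMeasure_uniformIcc ha
  set μ := (uniformIcc a).prod (uniformIcc a) with hμ
  set T := regionBetween (· + ε) (fun _ ↦ a) (Ioo 0 (a - ε))
  have hT_meas : MeasurableSet T :=
    measurableSet_regionBetween (by fun_prop) (by fun_prop) measurableSet_Ioo
  have hT_sub : T ⊆ Icc 0 a ×ˢ Icc 0 a := fun p ⟨hx, hy⟩ ↦
    ⟨⟨hx.1.le, by linarith [hx.2]⟩, ⟨by linarith [hx.1, hy.1], hy.2.le⟩⟩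
  have hμT : μ.real T = (1 - ε / a) ^ 2 / 2 := by
    rw [measureReal_def, hμ, uniformIcc_prod_uniformIcc, Measure.smul_apply,
      Measure.restrict_apply hT_meas, inter_eq_self_of_subset_left hT_sub,
      volume_regionBetween_add_const_const hεa, smul_eq_mul, ENNReal.toReal_mul, ENNReal.toReal_mul,
      ENNReal.toReal_inv, ENNReal.toReal_ofReal ha.le, ENNReal.toReal_ofReal (by positivity)]
    field_simp
  -- `μ` is invariant under swapping the coordinates, so the triangle below the diagonal band
  -- has the same mass as the triangle `T` above it.
  have hμT' : μ.real (Prod.swap ⁻¹' T) = μ.real T := by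
    rw [measureReal_def, measureReal_def,
      Measure.measurePreserving_swap.measure_preimage hT_meas.nullMeasurableSet]
  have hdisj : Disjoint T (Prod.swap ⁻¹' T) := by
    rw [disjoint_left]
    rintro ⟨x, y⟩ ⟨-, hy, -⟩ ⟨-, hx, -⟩
    dsimp at hx hy
    linarith
  have hband : {p : ℝ × ℝ | |p.1 - p.2| ≤ ε} ⊆ (T ∪ Prod.swap ⁻¹' T)ᶜ := by
    rintro ⟨x, y⟩ h (⟨-, hy, -⟩ | ⟨-, hx, -⟩) <;> dsimp at * <;> rw [abs_le] at h <;> linarith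
  calc μ.real {p : ℝ × ℝ | |p.1 - p.2| ≤ ε}
      ≤ μ.real (T ∪ Prod.swap ⁻¹' T)ᶜ := measureReal_mono hband
    _ = 1 - (μ.real T + μ.real (Prod.swap ⁻¹' T)) := by
      rw [probReal_compl_eq_one_sub (hT_meas.union (measurable_swap hT_meas)),
        measureReal_union hdisj (measurable_swap hT_meas)]
    _ = 1 - (1 - ε / a) ^ 2 := by rw [hμT', hμT]; ring

theorem uniform_not_conformant_general
    {Ω : Type*} [MeasurableSpace Ω] (P : Measure Ω) [IsProbabilityMeasure P]
    (ε δ δ' : ℝ) (hε : 0 < ε) (hδ : δ ∈ Set.Ioo (0 : ℝ) 1)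
    (hδ' : δ' ∈ Set.Ioo δ 1)
    (a : ℝ) (ha : ε / (1 - δ') * (1 + Real.sqrt δ') ≤ a)
    (Y₁ Y₂ : Ω → ℝ)
    (hindep : IndepFun Y₁ Y₂ P)
    (hmap₁ : Measure.map Y₁ P = uniformIcc a)
    (hmap₂ : Measure.map Y₂ P = uniformIcc a) :
    (P {ω | |Y₁ ω - Y₂ ω| ≤ ε}).toReal ≤ 1 - δ' ∧ 1 - δ' < 1 - δ ∧
      ¬(1 - δ ≤ (P {ω | |Y₁ ω - Y₂ ω| ≤ ε}).toReal) := by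
  obtain ⟨hδδ', hδ'₁⟩ := hδ'
  have hδ'₀ : 0 ≤ δ' := (hδ.1.trans hδδ').le
  rw [div_one_sub_mul_one_add_sqrt ε hδ'₀ hδ'₁] at ha
  obtain ⟨ha₀, hεa, hδ'_le⟩ :=
    sq_le_one_sub_div_sq hε (Real.sqrt_nonneg δ') (Real.sqrt_one ▸ Real.sqrt_lt_sqrt hδ'₀ hδ'₁) ha
  rw [Real.sq_sqrt hδ'₀] at hδ'_le
  -- `Measure.map` sends a function that is not a.e.-measurable to `0`.
  have haemeas : ∀ {Y : Ω → ℝ}, Measure.map Y P = uniformIcc a → AEMeasurable Y P := fun hY ↦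
    AEMeasurable.of_map_ne_zero (hY ▸ (isProbabilityMeasure_uniformIcc ha₀).ne_zero)
  have hP : P {ω | |Y₁ ω - Y₂ ω| ≤ ε} =
      (uniformIcc a).prod (uniformIcc a) {p | |p.1 - p.2| ≤ ε} := by
    have hS : MeasurableSet {p : ℝ × ℝ | |p.1 - p.2| ≤ ε} :=
      measurableSet_le (by fun_prop) measurable_const
    have h := hindep.measure_preimage_eq_prod (haemeas hmap₁) (haemeas hmap₂) hS
    rwa [hmap₁, hmap₂] at h
  have hbound := uniformIcc_prod_abs_sub_le ha₀ hε.le hεa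
  rw [measureReal_def, ← hP] at hbound
  exact ⟨by linarith, by linarith, fun h ↦ by linarith⟩

/-- Part (ii) of Proposition 1: for any `ε > 0` and `δ ∈ (0,1)`, choosing
`δ̄ ∈ (δ,1)` and `a ≥ (ε/(1-δ̄))·(1+√δ̄)`, independent uniform random variables
`Y₁, Y₂` on `[0,a]` satisfy `P(|Y₁-Y₂| ≤ ε) ≤ 1-δ̄ < 1-δ`; in particular they
are not `(ε,δ)`-conformant. -/
theorem uniform_not_conformant
    {Ω : Type*} [MeasurableSpace Ω] (P : Measure Ω) [IsProbabilityMeasure P]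
    (ε δ δ' : ℝ) (hε : 0 < ε) (hδ : δ ∈ Set.Ioo (0 : ℝ) 1)
    (hδ' : δ' ∈ Set.Ioo δ 1)
    (a : ℝ) (ha : ε / (1 - δ') * (1 + Real.sqrt δ') ≤ a)
    (Y₁ Y₂ : Ω → ℝ) (hY₁ : Measurable Y₁) (hY₂ : Measurable Y₂)
    (hindep : IndepFun Y₁ Y₂ P)
    (hmap₁ : Measure.map Y₁ P = uniformIcc a)
    (hmap₂ : Measure.map Y₂ P = uniformIcc a) :
    (P {ω | |Y₁ ω - Y₂ ω| ≤ ε}).toReal ≤ 1 - δ' ∧ 1 - δ' < 1 - δ ∧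
      ¬(1 - δ ≤ (P {ω | |Y₁ ω - Y₂ ω| ≤ ε}).toReal) :=
  uniform_not_conformant_general P ε δ δ' hε hδ hδ' a ha Y₁ Y₂ hindep hmap₁ hmap₂
end

section
/- Let Z be an integrable real-valued random variable on a probability space (Ω, 𝓕, P), let β ∈ (0,1), and assume the cumulative distribution function α ↦ P(Z ≤ α) is continuous. Let v := VaR_β(Z) := inf{α ∈ ℝ : P(Z ≤ α) ≥ β} and CVaR_β(Z) := inf_{α ∈ ℝ} (α + (1-β)⁻¹·E[max(Z-α, 0)]). Then P(Z ≥ v) = 1 - β and CVaR_β(Z) = E[Z · 𝟙(Z ≥ v)] / (1 - β), i.e., CVaR_β(Z) equals the conditional expectation E[Z | Z ≥ VaR_β(Z)]. -/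
/-!
The distribution function `F` of `Z` is continuous, so it attains the level `β` at its
generalised inverse `v = VaR_β(Z)` and has no atom there, whence `P(Z ≥ v) = 1 - F v = 1 - β`.
For the CVaR, the Rockafellar–Uryasev function `g α = α + (1 - β)⁻¹ E[(Z - α)⁺]` is minimised
at `v`: pointwise `(Z - α)⁺ ≥ (Z - v)⁺ + (v - α) 𝟙(Z ≥ v)`, and integrating gives
`g α ≥ g v` because `P(Z ≥ v) = 1 - β`. Finally `E[(Z - v)⁺] = E[Z 𝟙(Z ≥ v)] - v (1 - β)`.
-/

open MeasureTheory ProbabilityTheory Filter Set Topology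

theorem Continuous.apply_sInf_setOf_le_eq {F : ℝ → ℝ} {β : ℝ} (hF : Continuous F)
    (hbot : ∀ᶠ x in atBot, F x < β) (htop : ∃ x, β ≤ F x) :
    F (sInf {x | β ≤ F x}) = β := by
  set S := {x | β ≤ F x}
  have hbdd : BddBelow S := by
    obtain ⟨a, ha⟩ := eventually_atBot.1 hbot
    exact ⟨a, fun x hx => le_of_not_gt fun hxa => (ha x hxa.le).not_ge hx⟩
  have hmem : sInf S ∈ S := (isClosed_le continuous_const hF).csInf_mem htop hbdd
  refine le_antisymm (not_lt.1 fun hlt => ?_) hmem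
  -- points just left of `sInf S` would still lie in `S`
  have hnear : ∀ᶠ x in 𝓝[<] sInf S, β < F x :=
    nhdsWithin_le_nhds (hF.continuousAt.eventually (lt_mem_nhds hlt))
  obtain ⟨x, hxS, hxlt⟩ := (hnear.and self_mem_nhdsWithin).exists
  exact (csInf_le hbdd hxS.le).not_gt hxlt

namespace ProbabilityTheory

lemma measureReal_Ici_eq_one_sub_cdf {μ : Measure ℝ} [IsProbabilityMeasure μ] {x : ℝ}
    (hx : ContinuousWithinAt (cdf μ) (Iic x) x) : μ.real (Ici x) = 1 - cdf μ x := by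
  conv_lhs => rw [Measure.real, ← measure_cdf μ]
  rw [(cdf μ).measure_Ici (tendsto_cdf_atTop μ), hx.leftLim_eq,
    ENNReal.toReal_ofReal (sub_nonneg.2 (cdf_le_one μ x))]

lemma cdf_map_apply {Ω : Type*} [MeasurableSpace Ω] {P : Measure Ω} [IsProbabilityMeasure P]
    {Z : Ω → ℝ} (hZ : Measurable Z) (x : ℝ) : cdf (P.map Z) x = P.real {ω | Z ω ≤ x} := by
  have := Measure.isProbabilityMeasure_map (μ := P) hZ.aemeasurable
  rw [cdf_eq_real, map_measureReal_apply hZ measurableSet_Iic]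
  rfl

end ProbabilityTheory

section RockafellarUryasev

variable {Ω : Type*} [MeasurableSpace Ω] {P : Measure Ω} [IsFiniteMeasure P] {Z : Ω → ℝ}

lemma integral_max_sub_zero_eq (hZ : Measurable Z) (hZi : Integrable Z P) (v : ℝ) :
    ∫ ω, max (Z ω - v) 0 ∂P = ∫ ω in {ω | v ≤ Z ω}, Z ω ∂P - P.real {ω | v ≤ Z ω} * v := by
  have hA : MeasurableSet {ω | v ≤ Z ω} := measurableSet_le measurable_const hZ
  have hpos : (fun ω => max (Z ω - v) 0) = {ω | v ≤ Z ω}.indicator (fun ω => Z ω - v) := by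
    ext ω
    by_cases hω : v ≤ Z ω
    · simp [hω]
    · simp [hω, (not_le.1 hω).le]
  rw [hpos, integral_indicator hA, integral_sub hZi.integrableOn (integrableOn_const),
    setIntegral_const, smul_eq_mul]

lemma sub_mul_measureReal_add_integral_max_sub_le (hZ : Measurable Z) (hZi : Integrable Z P)
    (v α : ℝ) :
    (v - α) * P.real {ω | v ≤ Z ω} + ∫ ω, max (Z ω - v) 0 ∂P ≤ ∫ ω, max (Z ω - α) 0 ∂P := by
  have hA : MeasurableSet {ω | v ≤ Z ω} := measurableSet_le measurable_const hZ
  have hint : ∀ a : ℝ, Integrable (fun ω => max (Z ω - a) 0) P :=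
    fun a => (hZi.sub (integrable_const a)).pos_part
  rw [mul_comm, ← smul_eq_mul, ← integral_indicator_const _ hA,
    ← integral_add ((integrable_const _).indicator hA) (hint v)]
  refine integral_mono (((integrable_const _).indicator hA).add (hint v)) (hint α) fun ω => ?_
  by_cases hω : v ≤ Z ω
  · simp only [indicator_of_mem (show ω ∈ {ω | v ≤ Z ω} from hω), max_eq_left (sub_nonneg.2 hω)]
    linarith [le_max_left (Z ω - α) 0]
  · simp only [indicator_of_notMem (show ω ∉ {ω | v ≤ Z ω} from hω),
      max_eq_right (sub_nonpos.2 (not_le.1 hω).le)]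
    linarith [le_max_right (Z ω - α) 0]

lemma ciInf_add_inv_mul_integral_max_sub_eq (hZ : Measurable Z) (hZi : Integrable Z P) {v γ : ℝ}
    (hγ : 0 < γ) (htail : P.real {ω | v ≤ Z ω} = γ) :
    ⨅ α, (α + γ⁻¹ * ∫ ω, max (Z ω - α) 0 ∂P) = v + γ⁻¹ * ∫ ω, max (Z ω - v) 0 ∂P := by
  refine ciInf_eq_of_forall_ge_of_forall_gt_exists_lt (fun α => ?_) fun _ hw => ⟨v, hw⟩
  have hle := sub_mul_measureReal_add_integral_max_sub_le hZ hZi v α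
  rw [htail] at hle
  calc v + γ⁻¹ * ∫ ω, max (Z ω - v) 0 ∂P
      = α + γ⁻¹ * ((v - α) * γ + ∫ ω, max (Z ω - v) 0 ∂P) := by field_simp; ring
    _ ≤ α + γ⁻¹ * ∫ ω, max (Z ω - α) 0 ∂P := by gcongr

end RockafellarUryasev

/-- When the cumulative distribution function of `Z` is continuous, the
conditional value-at-risk equals the conditional expectation of `Z` above the
value-at-risk: `P(Z ≥ VaR_β(Z)) = 1 - β` and
`CVaR_β(Z) = E[Z · 𝟙(Z ≥ VaR_β(Z))] / (1 - β)`. -/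
theorem cvar_eq_conditional_expectation
    {Ω : Type*} [MeasurableSpace Ω] (P : Measure Ω) [IsProbabilityMeasure P]
    (Z : Ω → ℝ) (hZmeas : Measurable Z) (hZint : Integrable Z P)
    (β : ℝ) (hβ : β ∈ Set.Ioo (0 : ℝ) 1)
    (hcont : Continuous fun α : ℝ => (P {ω | Z ω ≤ α}).toReal)
    (v : ℝ) (hv : v = sInf {α : ℝ | β ≤ (P {ω | Z ω ≤ α}).toReal})
    (CVaR : ℝ)
    (hCVaR : CVaR = ⨅ α : ℝ, (α + (1 - β)⁻¹ * ∫ ω, max (Z ω - α) 0 ∂P)) :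
    (P {ω | v ≤ Z ω}).toReal = 1 - β ∧
      CVaR = (∫ ω in {ω | v ≤ Z ω}, Z ω ∂P) / (1 - β) := by
  obtain ⟨hβ0, hβ1⟩ := hβ
  simp only [← measureReal_def, ← cdf_map_apply hZmeas] at hcont hv ⊢
  have hcdf_v : cdf (P.map Z) v = β := hv ▸ hcont.apply_sInf_setOf_le_eq
    ((tendsto_cdf_atBot _).eventually (eventually_lt_nhds hβ0))
    ((tendsto_cdf_atTop _).eventually (eventually_ge_nhds hβ1)).exists
  have htail : P.real {ω | v ≤ Z ω} = 1 - β := by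
    have := Measure.isProbabilityMeasure_map (μ := P) hZmeas.aemeasurable
    rw [← hcdf_v, ← measureReal_Ici_eq_one_sub_cdf hcont.continuousWithinAt,
      map_measureReal_apply hZmeas measurableSet_Ici]
    rfl
  refine ⟨htail, ?_⟩
  rw [hCVaR, ciInf_add_inv_mul_integral_max_sub_eq hZmeas hZint (sub_pos.2 hβ1) htail,
    integral_max_sub_zero_eq hZmeas hZint, htail]
  field_simp
  ring
end

section
/- Let 𝕋 = [0, T₀] ⊂ ℝ be a compact interval and let y₁, y₂ : 𝕋 → ℝⁿ be bounded functions, with y₂ Lipschitz continuous with constant K ≥ 0. Let ℛ denote the set of strictly increasing bijections r : 𝕋 → 𝕋, and define the Skorokhod distance d_sk(y₁,y₂) := inf_{r∈ℛ} max( sup_{t∈𝕋} |r(t) - t|, sup_{t∈𝕋} ‖y₁(t) - y₂(r(t))‖ ). Then sup_{t∈𝕋} ‖y₁(t) - y₂(t)‖ ≤ (1 + K) · d_sk(y₁, y₂). -/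
/-- The Skorokhod distance between signals `y₁, y₂ : [0, T₀] → ℝⁿ`: the infimum
over all retimings (strictly increasing bijections of the time domain) of the
maximum of the magnitude of the retiming and the sup-distance between `y₁` and
the retimed `y₂`. -/
noncomputable def skorokhodDist {T₀ : ℝ} {n : ℕ}
    (y₁ y₂ : Set.Icc (0 : ℝ) T₀ → EuclideanSpace ℝ (Fin n)) : ℝ :=
  ⨅ r : {r : Set.Icc (0 : ℝ) T₀ → Set.Icc (0 : ℝ) T₀ //
      StrictMono r ∧ Function.Bijective r},
    max (⨆ t : Set.Icc (0 : ℝ) T₀, |((r : Set.Icc (0 : ℝ) T₀ → Set.Icc (0 : ℝ) T₀) t : ℝ) - t|)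
      (⨆ t : Set.Icc (0 : ℝ) T₀, ‖y₁ t - y₂ ((r : Set.Icc (0 : ℝ) T₀ → Set.Icc (0 : ℝ) T₀) t)‖)

/-- The sup-distance is bounded by `(1 + K)` times the Skorokhod distance when
`y₂` is `K`-Lipschitz (key step in the Hölder continuity of robust semantics
w.r.t. the Skorokhod metric). -/
theorem sup_dist_le_skorokhod
    (T₀ : ℝ) (hT₀ : 0 ≤ T₀) (n : ℕ)
    (y₁ y₂ : Set.Icc (0 : ℝ) T₀ → EuclideanSpace ℝ (Fin n))
    (hb₁ : ∃ M : ℝ, ∀ t, ‖y₁ t‖ ≤ M) (hb₂ : ∃ M : ℝ, ∀ t, ‖y₂ t‖ ≤ M)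
    (K : ℝ) (hK : 0 ≤ K)
    (hLip : ∀ s t : Set.Icc (0 : ℝ) T₀, ‖y₂ s - y₂ t‖ ≤ K * |(s : ℝ) - t|) :
    (⨆ t : Set.Icc (0 : ℝ) T₀, ‖y₁ t - y₂ t‖) ≤ (1 + K) * skorokhodDist y₁ y₂ := by
  obtain ⟨M₁, hM₁⟩ := hb₁
  obtain ⟨M₂, hM₂⟩ := hb₂
  have hpos : (0 : ℝ) < 1 + K := by linarith
  rw [← div_le_iff₀' hpos]
  have : Nonempty {r : Set.Icc (0 : ℝ) T₀ → Set.Icc (0 : ℝ) T₀ //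
      StrictMono r ∧ Function.Bijective r} :=
    ⟨⟨id, strictMono_id, Function.bijective_id⟩⟩
  apply le_ciInf
  intro r
  rw [div_le_iff₀' hpos]
  set A := ⨆ t : Set.Icc (0 : ℝ) T₀, |((r : Set.Icc (0 : ℝ) T₀ → Set.Icc (0 : ℝ) T₀) t : ℝ) - t|
  set B := ⨆ t : Set.Icc (0 : ℝ) T₀, ‖y₁ t - y₂ ((r : Set.Icc (0 : ℝ) T₀ → Set.Icc (0 : ℝ) T₀) t)‖
  have hAbdd : BddAbove (Set.range fun t : Set.Icc (0 : ℝ) T₀ =>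
      |((r : Set.Icc (0 : ℝ) T₀ → Set.Icc (0 : ℝ) T₀) t : ℝ) - t|) := by
    refine ⟨T₀, ?_⟩
    rintro x ⟨t, rfl⟩
    have h1 := ((r : Set.Icc (0 : ℝ) T₀ → Set.Icc (0 : ℝ) T₀) t).2
    have h2 := t.2
    simp only [Set.mem_Icc] at h1 h2
    rw [abs_le]; constructor <;> linarith
  have hBbdd : BddAbove (Set.range fun t : Set.Icc (0 : ℝ) T₀ =>
      ‖y₁ t - y₂ ((r : Set.Icc (0 : ℝ) T₀ → Set.Icc (0 : ℝ) T₀) t)‖) := by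
    refine ⟨M₁ + M₂, ?_⟩
    rintro x ⟨t, rfl⟩
    calc ‖y₁ t - y₂ _‖ ≤ ‖y₁ t‖ + ‖y₂ _‖ := norm_sub_le _ _
      _ ≤ M₁ + M₂ := add_le_add (hM₁ _) (hM₂ _)
  have hA0 : 0 ≤ A := Real.iSup_nonneg fun t => abs_nonneg _
  have hB0 : 0 ≤ B := Real.iSup_nonneg fun t => norm_nonneg _
  have hmax0 : 0 ≤ max A B := le_trans hA0 (le_max_left _ _)
  apply Real.iSup_le _ (by positivity)
  intro t
  have key : ‖y₁ t - y₂ t‖ ≤ B + K * A := by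
    have h1 : ‖y₁ t - y₂ t‖ ≤
        ‖y₁ t - y₂ ((r : Set.Icc (0 : ℝ) T₀ → Set.Icc (0 : ℝ) T₀) t)‖ +
        ‖y₂ ((r : Set.Icc (0 : ℝ) T₀ → Set.Icc (0 : ℝ) T₀) t) - y₂ t‖ := by
      have := norm_sub_le_norm_sub_add_norm_sub (y₁ t)
        (y₂ ((r : Set.Icc (0 : ℝ) T₀ → Set.Icc (0 : ℝ) T₀) t)) (y₂ t)
      exact this
    have h2 : ‖y₁ t - y₂ ((r : Set.Icc (0 : ℝ) T₀ → Set.Icc (0 : ℝ) T₀) t)‖ ≤ B :=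
      le_ciSup hBbdd t
    have h3 : ‖y₂ ((r : Set.Icc (0 : ℝ) T₀ → Set.Icc (0 : ℝ) T₀) t) - y₂ t‖ ≤ K * A := by
      calc ‖y₂ _ - y₂ t‖ ≤ K * |((r : Set.Icc (0 : ℝ) T₀ → Set.Icc (0 : ℝ) T₀) t : ℝ) - t| :=
            hLip _ _
        _ ≤ K * A := mul_le_mul_of_nonneg_left (le_ciSup hAbdd t) hK
    linarith
  calc ‖y₁ t - y₂ t‖ ≤ B + K * A := key
    _ ≤ max A B + K * max A B :=
        add_le_add (le_max_right _ _) (mul_le_mul_of_nonneg_left (le_max_left _ _) hK)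
    _ = (1 + K) * max A B := by ring
end
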